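/- arXiv:2602.08708 — 3 statements merged into one kernel-verified Lean document; each statement's English description precedes it below -/
import Mathlib

section
/- Let p be a STRIPS₁¹ instance on n variables (n ≥ 3), let v ∈ Fin n, and suppose A contains actions a = (l₁, (v, true)) and b = (l₂, (v, false)) with l₁ ≠ negation of l₂ and with the variables of l₁ and l₂ both different from v. Then every unordered pair {s, s'} of states with s' = s ⊕ (v, false), such that l₁, l₂ and (v, true) all hold in s, is a bidirectional edge of Q_n(p) in coordinate v; the number of such pairs is 2^(n−3) if l₁ ≠ l₂ and 2^(n−2) if l₁ = l₂. -/
/-- A literal over `n` propositional variables: a variable together with a Boolean sign. -/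
abbrev Lit (n : ℕ) : Type := Fin n × Bool

/-- A state: a truth assignment to the `n` variables. -/
abbrev State (n : ℕ) : Type := Fin n → Bool

/-- The negation of a literal. -/
def Lit.neg {n : ℕ} (l : Lit n) : Lit n := (l.1, !l.2)

/-- A literal holds in a state iff the state assigns it its sign. -/
def Holds {n : ℕ} (s : State n) (l : Lit n) : Prop := s l.1 = l.2

/-- `s ⊕ l`: the state agreeing with `s` except variable `l.1` is set to `l.2`. -/
def applyLit {n : ℕ} (s : State n) (l : Lit n) : State n :=
  Function.update s l.1 l.2

/-- A STRIPS₁¹ action (Act): a pair (precondition, effect) of literals. -/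
abbrev Act (n : ℕ) : Type := Lit n × Lit n

/-- Edge of the induced graph `Q_n(p)`. -/
def Edge {n : ℕ} (A : Finset (Act n)) (s s' : State n) : Prop :=
  ∃ a ∈ A, Holds s a.1 ∧ s' = applyLit s a.2 ∧ s' ≠ s

/-- `{s₁, s₂}` is a bidirectional edge: edges in both directions. -/
def BidirEdge {n : ℕ} (A : Finset (Act n)) (s₁ s₂ : State n) : Prop :=
  Edge A s₁ s₂ ∧ Edge A s₂ s₁

/-- The set of bidirectional edges of `Q_n(p)`, as unordered pairs of states. -/
def bidirEdges {n : ℕ} (A : Finset (Act n)) : Set (Sym2 (State n)) :=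
  {e | ∃ s₁ s₂, e = s(s₁, s₂) ∧ BidirEdge A s₁ s₂}

/-- The set of bidirectional edges of `Q_n(p)` in coordinate `v`:
the two endpoints differ exactly in the variable `v`. -/
def bidirEdgesIn {n : ℕ} (A : Finset (Act n)) (v : Fin n) : Set (Sym2 (State n)) :=
  {e | ∃ s₁ s₂, e = s(s₁, s₂) ∧ BidirEdge A s₁ s₂ ∧
    s₁ v ≠ s₂ v ∧ ∀ w : Fin n, w ≠ v → s₁ w = s₂ w}

/-- A good instance: each variable has a positive and a negative achiever
whose preconditions are not each other's negation. -/
def Good {n : ℕ} (A : Finset (Act n)) : Prop :=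
  ∀ v : Fin n, ∃ a ∈ A, ∃ b ∈ A,
    a.2 = (v, true) ∧ b.2 = (v, false) ∧ a.1 ≠ Lit.neg b.1

/-- The state obtained by applying the effects of a list of actions to `s`. -/
def execStates {n : ℕ} (s : State n) (ω : List (Act n)) : State n :=
  ω.foldl (fun t a => applyLit t a.2) s

/-- `ω` is a plan from `sI` to `sG` for the instance with actions `A`. -/
def IsPlan {n : ℕ} (A : Finset (Act n)) (sI sG : State n) (ω : List (Act n)) : Prop :=
  (∀ i : Fin ω.length, ω.get i ∈ A ∧ Holds (execStates sI (ω.take i)) (ω.get i).1) ∧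
  execStates sI ω = sG

/-- `ω` is a shortest plan from `sI` to `sG`. -/
def IsShortestPlan {n : ℕ} (A : Finset (Act n)) (sI sG : State n)
    (ω : List (Act n)) : Prop :=
  IsPlan A sI sG ω ∧ ∀ ω', IsPlan A sI sG ω' → ω.length ≤ ω'.length

/-- The plan `ω` started at `sI` visits the state `s`. -/
def Visits {n : ℕ} (sI : State n) (ω : List (Act n)) (s : State n) : Prop :=
  ∃ i ≤ ω.length, execStates sI (ω.take i) = s

/-!
Applying the negative achiever `(l₂, (v, false))` to `s` and then the positive achiever
`(l₁, (v, true))` flips `v` back, and the precondition `l₁` survives the first flip because its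
variable is not `v`; so `{s, s ⊕ (v, false)}` is a bidirectional edge. Since `(v, true)` holds at
`s` but not at `s ⊕ (v, false)`, the pair determines `s`, and counting pairs amounts to counting
the states satisfying the literals `l₁, l₂, (v, true)`. The hypothesis `l₁ ≠ ¬l₂` makes these
literals consistent, so they pin down `3` variables if `l₁ ≠ l₂` and `2` if `l₁ = l₂`, leaving the
other ones free.
-/

open Finset

lemma ncard_setOf_forall_mem_eq {α β : Type*} [Fintype α] [DecidableEq α] [Fintype β]
    (T : Finset α) (f : α → β) :
    {s : α → β | ∀ i ∈ T, s i = f i}.ncard = Fintype.card β ^ (Fintype.card α - #T) := by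
  have hpi : {s : α → β | ∀ i ∈ T, s i = f i} =
      ↑(Fintype.piFinset fun i => if i ∈ T then {f i} else univ) := by
    ext s
    simp only [Set.mem_ofPred_eq, Fintype.coe_piFinset, Set.mem_pi, Set.mem_univ, forall_const]
    refine forall_congr' fun i => ?_
    split_ifs <;> simp [*]
  rw [hpi, Set.ncard_coe_finset, Fintype.card_piFinset]
  simp only [apply_ite Finset.card, card_singleton, card_univ]
  rw [prod_ite, prod_const_one, one_mul, prod_const, filter_not, card_sdiff, filter_mem_eq_inter,
    univ_inter, inter_univ, card_univ]

section Strips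

variable {n : ℕ}

lemma Lit.eq_of_fst_eq_of_ne_neg {l m : Lit n} (hfst : l.1 = m.1) (hneg : l ≠ m.neg) : l = m := by
  obtain ⟨i, b⟩ := l
  obtain ⟨j, c⟩ := m
  cases b <;> cases c <;> simp_all [Lit.neg]

lemma holds_applyLit_of_fst_ne {s : State n} {l m : Lit n} (h : l.1 ≠ m.1) :
    Holds (applyLit s m) l ↔ Holds s l := by
  simp only [Holds, applyLit, Function.update_of_ne h]

lemma applyLit_ne_self {s : State n} {l : Lit n} (h : ¬ Holds s l) : applyLit s l ≠ s := by
  intro heq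
  apply h
  rw [Holds, ← heq, applyLit, Function.update_self]

lemma applyLit_applyLit_neg {s : State n} {l : Lit n} (h : Holds s l) :
    applyLit (applyLit s l.neg) l = s := by
  show Function.update (Function.update s l.1 _) l.1 l.2 = s
  rw [Function.update_idem, ← h, Function.update_eq_self]

lemma not_holds_applyLit_neg (s : State n) (l : Lit n) : ¬ Holds (applyLit s l.neg) l := by
  simp [Holds, applyLit, Lit.neg]

lemma edge_applyLit {A : Finset (Act n)} {a : Act n} {s : State n} (ha : a ∈ A)
    (hpre : Holds s a.1) (heff : ¬ Holds s a.2) : Edge A s (applyLit s a.2) :=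
  ⟨a, ha, hpre, rfl, applyLit_ne_self heff⟩

lemma mk_applyLit_neg_mem_bidirEdgesIn {A : Finset (Act n)} {l p q : Lit n}
    (hp : (p, l) ∈ A) (hq : (q, l.neg) ∈ A) (hpl : p.1 ≠ l.1) {s : State n}
    (hsp : Holds s p) (hsq : Holds s q) (hsl : Holds s l) :
    s(s, applyLit s l.neg) ∈ bidirEdgesIn A l.1 := by
  have hflip : ¬ Holds (applyLit s l.neg) l := not_holds_applyLit_neg s l
  refine ⟨s, applyLit s l.neg, rfl, ⟨?_, ?_⟩, fun h => hflip (h.symm.trans hsl), fun w hw => ?_⟩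
  · refine edge_applyLit hq hsq fun h => ?_
    simp_all [Holds, Lit.neg]
  · have := edge_applyLit (s := applyLit s l.neg) hp
      ((holds_applyLit_of_fst_ne (m := l.neg) hpl).2 hsp) hflip
    rwa [applyLit_applyLit_neg hsl] at this
  · simp [applyLit, Lit.neg, Function.update_of_ne hw]

lemma injOn_mk_applyLit_neg (l : Lit n) :
    Set.InjOn (fun s : State n => s(s, applyLit s l.neg)) {s | Holds s l} := by
  intro s hs t _ hst
  rcases Sym2.eq_iff.1 hst with ⟨h, -⟩ | ⟨h, -⟩
  · exact h
  · exact absurd (h ▸ hs) (not_holds_applyLit_neg t l)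

lemma ncard_setOf_forall_holds {L : Finset (Lit n)} (hL : Set.InjOn Prod.fst (L : Set (Lit n))) :
    {s : State n | ∀ l ∈ L, Holds s l}.ncard = 2 ^ (n - #L) := by
  have hset : {s : State n | ∀ l ∈ L, Holds s l} =
      {s | ∀ i ∈ L.image Prod.fst, s i = decide ((i, true) ∈ L)} := by
    ext s
    simp only [Set.mem_ofPred_eq, forall_mem_image]
    refine forall₂_congr fun l hl => ?_
    obtain ⟨i, b⟩ := l
    cases b
    · have : (i, true) ∉ L := fun h => Bool.false_ne_true (congrArg Prod.snd (hL hl h rfl))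
      simp [Holds, this]
    · simp [Holds, hl]
  rw [hset, ncard_setOf_forall_mem_eq, card_image_of_injOn hL, Fintype.card_bool,
    Fintype.card_fin]

lemma ncard_setOf_holds_and_holds_and_holds {l₁ l₂ m : Lit n} (hneg : l₁ ≠ l₂.neg)
    (h₁ : l₁.1 ≠ m.1) (h₂ : l₂.1 ≠ m.1) :
    {s : State n | Holds s l₁ ∧ Holds s l₂ ∧ Holds s m}.ncard =
      if l₁ ≠ l₂ then 2 ^ (n - 3) else 2 ^ (n - 2) := by
  have hL : Set.InjOn Prod.fst (({l₁, l₂, m} : Finset (Lit n)) : Set (Lit n)) := by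
    intro x hx y hy hxy
    simp only [coe_insert, coe_singleton, Set.mem_insert_iff, Set.mem_singleton_iff] at hx hy
    rcases hx with rfl | rfl | rfl <;> rcases hy with rfl | rfl | rfl <;>
      first
        | rfl
        | exact Lit.eq_of_fst_eq_of_ne_neg hxy hneg
        | exact (Lit.eq_of_fst_eq_of_ne_neg hxy.symm hneg).symm
        | exact absurd hxy ‹_›
        | exact absurd hxy.symm ‹_›
  have hm₁ : l₁ ≠ m := fun h => h₁ (congrArg Prod.fst h)
  have hm₂ : l₂ ≠ m := fun h => h₂ (congrArg Prod.fst h)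
  have hset : {s : State n | Holds s l₁ ∧ Holds s l₂ ∧ Holds s m} =
      {s | ∀ l ∈ ({l₁, l₂, m} : Finset (Lit n)), Holds s l} := by
    simp only [mem_insert, mem_singleton, forall_eq_or_imp, forall_eq]
  rw [hset, ncard_setOf_forall_holds hL]
  by_cases h : l₁ = l₂ <;> simp [h, hm₁, hm₂]

end Strips

theorem stmt1_general {n : ℕ} (A : Finset (Act n)) (v : Fin n)
    (l₁ l₂ : Lit n) (ha : (l₁, ((v, true) : Lit n)) ∈ A)
    (hb : (l₂, ((v, false) : Lit n)) ∈ A)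
    (hneg : l₁ ≠ Lit.neg l₂) (hv₁ : l₁.1 ≠ v) (hv₂ : l₂.1 ≠ v) :
    (∀ s : State n, Holds s l₁ → Holds s l₂ → s v = true →
        s(s, applyLit s ((v, false) : Lit n)) ∈ bidirEdgesIn A v) ∧
    {e : Sym2 (State n) | ∃ s : State n, Holds s l₁ ∧ Holds s l₂ ∧ s v = true ∧
        e = s(s, applyLit s ((v, false) : Lit n))}.ncard =
      (if l₁ ≠ l₂ then 2 ^ (n - 3) else 2 ^ (n - 2)) := by
  set t : Lit n := (v, true)
  refine ⟨fun s h₁ h₂ hv => mk_applyLit_neg_mem_bidirEdgesIn (l := t) ha hb hv₁ h₁ h₂ hv, ?_⟩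
  have himage : {e : Sym2 (State n) | ∃ s : State n, Holds s l₁ ∧ Holds s l₂ ∧ s v = true ∧
      e = s(s, applyLit s ((v, false) : Lit n))} =
      (fun s : State n => s(s, applyLit s t.neg)) '' {s | Holds s l₁ ∧ Holds s l₂ ∧ Holds s t} :=
    Set.ext fun e => exists_congr fun s =>
      ⟨fun ⟨h₁, h₂, hv, he⟩ => ⟨⟨h₁, h₂, hv⟩, he.symm⟩,
        fun ⟨⟨h₁, h₂, hv⟩, he⟩ => ⟨h₁, h₂, hv, he.symm⟩⟩
  have hinj : Set.InjOn (fun s : State n => s(s, applyLit s t.neg))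
      {s | Holds s l₁ ∧ Holds s l₂ ∧ Holds s t} :=
    (injOn_mk_applyLit_neg t).mono fun s hs => hs.2.2
  rw [himage, hinj.ncard_image, ncard_setOf_holds_and_holds_and_holds hneg hv₁ hv₂]

/-- if `A` contains actions `(l₁, (v,true))` and `(l₂, (v,false))` with
`l₁ ≠ ¬l₂` and the variables of `l₁, l₂` different from `v`, then every pair
`{s, s ⊕ (v,false)}` with `l₁`, `l₂`, `(v,true)` holding in `s` is a bidirectional
edge in coordinate `v`, and the number of such pairs is `2^(n-3)` if `l₁ ≠ l₂`
and `2^(n-2)` if `l₁ = l₂`. -/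
theorem stmt1 {n : ℕ} (hn : 3 ≤ n) (A : Finset (Act n)) (v : Fin n)
    (l₁ l₂ : Lit n) (ha : (l₁, ((v, true) : Lit n)) ∈ A)
    (hb : (l₂, ((v, false) : Lit n)) ∈ A)
    (hneg : l₁ ≠ Lit.neg l₂) (hv₁ : l₁.1 ≠ v) (hv₂ : l₂.1 ≠ v) :
    (∀ s : State n, Holds s l₁ → Holds s l₂ → s v = true →
        s(s, applyLit s ((v, false) : Lit n)) ∈ bidirEdgesIn A v) ∧
    {e : Sym2 (State n) | ∃ s : State n, Holds s l₁ ∧ Holds s l₂ ∧ s v = true ∧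
        e = s(s, applyLit s ((v, false) : Lit n))}.ncard =
      (if l₁ ≠ l₂ then 2 ^ (n - 3) else 2 ^ (n - 2)) :=
  stmt1_general A v l₁ l₂ ha hb hneg hv₁ hv₂
end

section
/- Let p be a STRIPS₁¹ instance on n variables, let ω be a shortest plan from s_I to s_G with state sequence s_I = t₀, t₁, …, t_k = s_G, and suppose {t_i, t_j} is a bidirectional edge of Q_n(p) for some indices i < j. Then j = i + 1. Consequently, for any state s visited by ω, at most two of the states connected to s by a bidirectional edge are visited by ω (namely the immediate predecessor and the immediate successor of s on ω). -/
lemma execStates_append {n : ℕ} (s : State n) (l1 l2 : List (Act n)) :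
    execStates s (l1 ++ l2) = execStates (execStates s l1) l2 :=
  List.foldl_append

lemma execStates_cons {n : ℕ} (s : State n) (a : Act n) (l : List (Act n)) :
    execStates s (a :: l) = execStates (applyLit s a.2) l := rfl

lemma shortcut {n : ℕ} (A : Finset (Act n)) (sI sG : State n) (ω : List (Act n))
    (hω : IsShortestPlan A sI sG ω) (i j : ℕ) (hij : i < j) (hj : j ≤ ω.length)
    (he : Edge A (execStates sI (ω.take i)) (execStates sI (ω.take j))) :
    j = i + 1 := by
  obtain ⟨⟨hvalid, hfin⟩, hmin⟩ := hω
  obtain ⟨a, haA, hpre, happ, hne⟩ := he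
  have hilen : i < ω.length := lt_of_lt_of_le hij hj
  set ω' : List (Act n) := ω.take i ++ a :: ω.drop j with hw'
  have hti : (ω.take i).length = i := by
    simp [List.length_take]; omega
  have hlen' : ω'.length = i + 1 + (ω.length - j) := by
    simp [hw', List.length_take, List.length_drop]; omega
  have htake_le : ∀ f : ℕ, f ≤ i → ω'.take f = ω.take f := by
    intro f hf
    rw [hw', List.take_append_of_le_length (by omega), List.take_take]
    congr 1; omega
  have hstate : ∀ r : ℕ, execStates sI (ω'.take (i + 1 + r)) =
      execStates sI (ω.take (j + r)) := by
    intro r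
    have h1 : ω'.take (i + 1 + r) = ω.take i ++ a :: (ω.drop j).take r := by
      rw [hw', List.take_append, List.take_take]
      congr 1
      · congr 1; omega
      · rw [hti]
        have : i + 1 + r - i = r + 1 := by omega
        rw [this]
        simp [List.take_cons]
    rw [h1, execStates_append, execStates_cons, ← happ, ← execStates_append,
      ← List.take_add]
  have hplan' : IsPlan A sI sG ω' := by
    refine ⟨?_, ?_⟩
    · intro f
      simp only [List.get_eq_getElem]
      rcases lt_trichotomy (f : ℕ) i with hf | hf | hf
      · have hfl : (f : ℕ) < ω.length := by omega
        have hg : ω'[(f : ℕ)] = ω[(f : ℕ)] := by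
          simp only [hw']
          rw [List.getElem_append_left (by omega : (f : ℕ) < (ω.take i).length)]
          exact List.getElem_take
        rw [hg, htake_le f (le_of_lt hf)]
        exact hvalid ⟨f, hfl⟩
      · have hg : ω'[(f : ℕ)] = a := by
          simp only [hw']
          rw [List.getElem_append_right (by omega : (ω.take i).length ≤ (f : ℕ))]
          have h0 : (f : ℕ) - i ⊓ ω.length = 0 := by
            simp only [hf]; omega
          simp [h0]
        rw [hg, hf, htake_le i le_rfl]
        exact ⟨haA, hpre⟩
      · have hfub : (f : ℕ) < i + 1 + (ω.length - j) := by
          have := f.isLt; omega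
        set r : ℕ := (f : ℕ) - i - 1 with hr
        have hfr : (f : ℕ) = i + 1 + r := by omega
        have hrlt : r < ω.length - j := by omega
        have hjr : j + r < ω.length := by omega
        have hg : ω'[(f : ℕ)] = ω[j + r] := by
          simp only [hw']
          rw [List.getElem_append_right (by omega : (ω.take i).length ≤ (f : ℕ))]
          have : (f : ℕ) - (ω.take i).length = r + 1 := by omega
          simp only [this]
          rw [List.getElem_cons_succ, List.getElem_drop]
        rw [hg, hfr, hstate r]
        exact hvalid ⟨j + r, hjr⟩
    · rw [hw', execStates_append, execStates_cons, ← happ, ← execStates_append,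
        List.take_append_drop]
      exact hfin
  have := hmin ω' hplan'
  rw [hlen'] at this
  omega

/-- on a shortest plan, a bidirectional edge between the `i`-th and
`j`-th states of the state sequence (`i < j`) forces `j = i + 1`; consequently any
visited state has at most two bidirectional neighbors that are visited. -/
theorem stmt5 {n : ℕ} (A : Finset (Act n)) (sI sG : State n) (ω : List (Act n))
    (hω : IsShortestPlan A sI sG ω) (i j : ℕ) (hij : i < j) (hj : j ≤ ω.length)
    (hb : BidirEdge A (execStates sI (ω.take i)) (execStates sI (ω.take j))) :
    j = i + 1 ∧
      ∀ s : State n, Visits sI ω s →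
        {u : State n | BidirEdge A s u ∧ Visits sI ω u}.ncard ≤ 2 := by
  
  have key : ∀ i' j' : ℕ, i' < j' → j' ≤ ω.length →
      Edge A (execStates sI (ω.take i')) (execStates sI (ω.take j')) → j' = i' + 1 :=
    fun i' j' h1 h2 h3 => shortcut A sI sG ω hω i' j' h1 h2 h3
  refine ⟨key i j hij hj hb.1, ?_⟩
  intro s hs
  obtain ⟨m, hm, hms⟩ := hs
  have hsub : {u : State n | BidirEdge A s u ∧ Visits sI ω u} ⊆
      {execStates sI (ω.take (m - 1)), execStates sI (ω.take (m + 1))} := by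
    rintro u ⟨hbu, l, hl, hlu⟩
    have hune : u ≠ s := by
      obtain ⟨a, _, _, _, hne⟩ := hbu.1
      exact hne
    have hlm : l ≠ m := by
      rintro rfl; exact hune (hlu ▸ hms ▸ rfl)
    rcases lt_or_gt_of_ne hlm with h | h
    · have e1 : Edge A (execStates sI (ω.take l)) (execStates sI (ω.take m)) := by
        rw [hlu, hms]; exact hbu.2
      have h2 : m = l + 1 := key l m h hm e1
      have h3 : l = m - 1 := by omega
      exact Or.inl (by rw [← hlu, h3])
    · have e1 : Edge A (execStates sI (ω.take m)) (execStates sI (ω.take l)) := by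
        rw [hlu, hms]; exact hbu.1
      have h2 : l = m + 1 := key m l h hl e1
      exact Or.inr (by rw [← hlu, h2]; rfl)
  calc {u : State n | BidirEdge A s u ∧ Visits sI ω u}.ncard
      ≤ ({execStates sI (ω.take (m - 1)), execStates sI (ω.take (m + 1))} :
        Set (State n)).ncard :=
        Set.ncard_le_ncard hsub ((Set.finite_singleton _).insert _)
    _ ≤ 2 := by
        refine le_trans (Set.ncard_insert_le _ _) ?_
        simp [Set.ncard_singleton]
end

section
/- Let p be a STRIPS₁¹ instance on n variables in which no action has precondition equal to the negation of its effect, and let s_I be a state. Then every marking reachable from m_{s_I} by a firing sequence equals m_s for some state s. In particular the associated Petri net, started from m_{s_I}, is safe (every reachable marking assigns at most 1 token to each place) and conservative (every reachable marking has total token count exactly n). -/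
/-- A Petri-net marking: a number of tokens on each literal place. -/
abbrev Marking (n : ℕ) : Type := Lit n → ℕ

/-- The marking associated to a state: one token on each literal holding in `s`. -/
def stateMarking {n : ℕ} (s : State n) : Marking n :=
  fun l => if s l.1 = l.2 then 1 else 0

/-- Firing the transition of action `a`: consume a token at the negated effect,
produce one at the effect (the token at the precondition is consumed and
immediately reproduced). -/
def fire {n : ℕ} (a : Act n) (m : Marking n) : Marking n :=
  fun l => if l = Lit.neg a.2 then m l - 1 else if l = a.2 then m l + 1 else m l

/-- One firing step of the Petri net associated to the instance with actions `A`. -/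
def FireStep {n : ℕ} (A : Finset (Act n)) (m m' : Marking n) : Prop :=
  ∃ a ∈ A, 1 ≤ m a.1 ∧ 1 ≤ m (Lit.neg a.2) ∧ m' = fire a m

lemma sum_stateMarking {n : ℕ} (s : State n) : ∑ l : Lit n, stateMarking s l = n := by
  rw [Fintype.sum_prod_type]
  have h : ∀ v : Fin n, ∑ b : Bool, stateMarking s (v, b) = 1 := by
    intro v
    rw [Fintype.sum_bool]
    simp only [stateMarking]
    cases hv : s v <;> simp [hv]
  calc ∑ v : Fin n, ∑ b : Bool, stateMarking s (v, b) = ∑ _v : Fin n, 1 :=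
        Finset.sum_congr rfl (fun v _ => h v)
    _ = n := by simp

lemma fire_state {n : ℕ} (s : State n) (a : Act n) (h : s a.2.1 = !a.2.2) :
    fire a (stateMarking s) = stateMarking (applyLit s a.2) := by
  funext l
  obtain ⟨v, b⟩ := l
  simp only [fire, stateMarking, applyLit, Lit.neg]
  by_cases hv : v = a.2.1
  · subst hv
    by_cases hb : b = !a.2.2
    · subst hb
      simp [h, Function.update_self]
    · have hb2 : b = a.2.2 := by revert hb; cases b <;> cases a.2.2 <;> simp
      subst hb2
      have h1 : (a.2.1, a.2.2) ≠ (a.2.1, (!a.2.2 : Bool)) := by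
        simp [Prod.ext_iff]
      have h2 : (a.2.1, a.2.2) = a.2 := Prod.mk.eta
      have h3 : ¬ (s a.2.1 = a.2.2) := by rw [h]; cases a.2.2 <;> simp
      simp only [if_neg h1, if_pos h2]
      simp [Function.update_self, h3]
  · have h1 : (v, b) ≠ (a.2.1, (!a.2.2 : Bool)) := by simp [Prod.ext_iff, hv]
    have h2 : (v, b) ≠ a.2 := by
      intro hc; exact hv (congrArg Prod.fst hc)
    simp only [if_neg h1, if_neg h2]
    simp [Function.update_of_ne hv]

/-- for an instance in which no action's precondition is the negation
of its effect, every marking reachable from `m_{s_I}` is of the form `m_s`; in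
particular the net is safe (at most one token per place) and conservative (total
token count always `n`). -/
theorem stmt15 {n : ℕ} (A : Finset (Act n)) (hA : ∀ a ∈ A, a.1 ≠ Lit.neg a.2)
    (sI : State n) :
    ∀ m : Marking n, Relation.ReflTransGen (FireStep A) (stateMarking sI) m →
      (∃ s : State n, m = stateMarking s) ∧
      (∀ l : Lit n, m l ≤ 1) ∧
      (∑ l : Lit n, m l = n) := by
  intro m hm
  have key : ∃ s : State n, m = stateMarking s := by
    induction hm with
    | refl => exact ⟨sI, rfl⟩
    | tail _ hstep ih =>
      obtain ⟨s, rfl⟩ := ih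
      obtain ⟨a, _, _, hen, rfl⟩ := hstep
      have h : s a.2.1 = !a.2.2 := by
        by_contra hc
        simp [stateMarking, Lit.neg, hc] at hen
      exact ⟨applyLit s a.2, fire_state s a h⟩
  refine ⟨key, ?_, ?_⟩
  · obtain ⟨s, rfl⟩ := key
    intro l
    simp only [stateMarking]
    split <;> simp
  · obtain ⟨s, rfl⟩ := key
    exact sum_stateMarking s
end
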